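/- arXiv:2110.02539 — 2 statements merged into one kernel-verified Lean document; each statement's English description precedes it below -/
import Mathlib

section
/- Let p be a prime with p ≡ 1 (mod 3). Then D_{U(p)^3}(p) ≥ 3; that is, there exists a sequence of length 2 in Z_p (for instance (−1, x) where x ∈ U(p) \ U(p)^3) that has no nonempty subsequence which is a U(p)^3-weighted zero-sum sequence. -/
/-- A list `L` over `ZMod n` is an `A`-weighted zero-sum sequence if there are weights
`a₁, …, a_k ∈ A` (one per term) with `a₁x₁ + ⋯ + a_kx_k = 0`. -/
def IsWeightedZeroSum {n : ℕ} (A : Set (ZMod n)) (L : List (ZMod n)) : Prop :=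
  ∃ a : List (ZMod n), a.length = L.length ∧ (∀ w ∈ a, w ∈ A) ∧
    (List.zipWith (· * ·) a L).sum = 0

/-- `L` has a nonempty subsequence of consecutive terms which is an
`A`-weighted zero-sum sequence. -/
def HasConsecWZS {n : ℕ} (A : Set (ZMod n)) (L : List (ZMod n)) : Prop :=
  ∃ l₁ l₂ l₃ : List (ZMod n), L = l₁ ++ l₂ ++ l₃ ∧ l₂ ≠ [] ∧ IsWeightedZeroSum A l₂

/-- `L` has a nonempty subsequence (not necessarily of consecutive terms) which is an
`A`-weighted zero-sum sequence. -/
def HasSubWZS {n : ℕ} (A : Set (ZMod n)) (L : List (ZMod n)) : Prop :=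
  ∃ l : List (ZMod n), l.Sublist L ∧ l ≠ [] ∧ IsWeightedZeroSum A l

/-! Since `3 ∣ p - 1 = |U(p)|`, cubing is not injective on the finite group `U(p)`, hence not
surjective: there is a non-cube unit `x`. In `[-1, x]` no single term is killed by a unit weight,
and `-a + b x = 0` with cubes `a = v₁³`, `b = v₂³` would make `x = (v₁ / v₂)³` a cube. -/

lemma List.sublist_pair_cases {α : Type*} {l : List α} {a b : α} (h : l.Sublist [a, b]) :
    l = [] ∨ l = [a] ∨ l = [b] ∨ l = [a, b] := by
  rcases h with _ | ⟨_, _ | ⟨_, h⟩⟩ | ⟨_, _ | ⟨_, h⟩⟩ <;> simp_all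

section WeightedZeroSum

variable {n : ℕ} {A : Set (ZMod n)}

lemma isWeightedZeroSum_singleton_iff {x : ZMod n} :
    IsWeightedZeroSum A [x] ↔ ∃ a ∈ A, a * x = 0 := by
  constructor
  · rintro ⟨a, hlen, hA, hsum⟩
    obtain ⟨a, rfl⟩ := List.length_eq_one_iff.mp hlen
    exact ⟨a, hA a (by simp), by simpa using hsum⟩
  · rintro ⟨a, ha, hsum⟩
    exact ⟨[a], rfl, by simpa using ha, by simpa using hsum⟩

lemma isWeightedZeroSum_pair_iff {x y : ZMod n} :
    IsWeightedZeroSum A [x, y] ↔ ∃ a ∈ A, ∃ b ∈ A, a * x + b * y = 0 := by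
  constructor
  · rintro ⟨a, hlen, hA, hsum⟩
    obtain ⟨a, b, rfl⟩ := List.length_eq_two.mp hlen
    exact ⟨a, hA a (by simp), b, hA b (by simp), by simpa using hsum⟩
  · rintro ⟨a, ha, b, hb, hsum⟩
    exact ⟨[a, b], rfl, by simp [ha, hb], by simpa using hsum⟩

lemma hasSubWZS_pair_iff {x y : ZMod n} :
    HasSubWZS A [x, y] ↔
      IsWeightedZeroSum A [x] ∨ IsWeightedZeroSum A [y] ∨ IsWeightedZeroSum A [x, y] := by
  constructor
  · rintro ⟨l, hsub, hne, hl⟩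
    rcases List.sublist_pair_cases hsub with rfl | rfl | rfl | rfl
    exacts [absurd rfl hne, .inl hl, .inr (.inl hl), .inr (.inr hl)]
  · rintro (h | h | h)
    exacts [⟨_, by simp, by simp, h⟩, ⟨_, by simp, by simp, h⟩, ⟨_, .refl _, by simp, h⟩]

theorem not_hasSubWZS_neg_one_of_forall_pow_ne [Nontrivial (ZMod n)] {k : ℕ} {x : (ZMod n)ˣ}
    (hx : ∀ u : (ZMod n)ˣ, u ^ k ≠ x) :
    ¬ HasSubWZS {y : ZMod n | ∃ u : (ZMod n)ˣ, (u : ZMod n) ^ k = y} [-1, (x : ZMod n)] := by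
  simp only [hasSubWZS_pair_iff, isWeightedZeroSum_singleton_iff, isWeightedZeroSum_pair_iff,
    Set.mem_ofPred_eq]
  rintro (⟨_, ⟨v, rfl⟩, h⟩ | ⟨_, ⟨v, rfl⟩, h⟩ | ⟨_, ⟨v₁, rfl⟩, _, ⟨v₂, rfl⟩, h⟩)
  · exact (v ^ k).ne_zero (by push_cast; simpa using h)
  · exact (v ^ k).ne_zero (by push_cast; simpa using h)
  · have hv : v₁ ^ k = v₂ ^ k * x := Units.ext (by push_cast; linear_combination -h)
    exact hx (v₁ * v₂⁻¹) (by rw [mul_pow, inv_pow, hv, mul_inv_cancel_comm])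

end WeightedZeroSum

lemma exists_forall_pow_ne_of_prime_dvd_card {G : Type*} [Group G] [Finite G] {q : ℕ}
    [Fact q.Prime] (hq : q ∣ Nat.card G) : ∃ x : G, ∀ u : G, u ^ q ≠ x := by
  obtain ⟨g, hg⟩ := exists_prime_orderOf_dvd_card' q hq
  have hg1 : g ≠ 1 := by
    rintro rfl
    exact (Fact.out : q.Prime).one_lt.ne' (hg ▸ orderOf_one)
  have not_inj : ¬ Function.Injective (fun u : G => u ^ q) := fun hinj =>
    hg1 (hinj (by simp [← hg, pow_orderOf_eq_one]))
  simpa [Function.Surjective] using mt Finite.injective_iff_surjective.mpr not_inj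

/-- For a prime `p ≡ 1 (mod 3)`, `D_{U(p)³}(p) ≥ 3`: there is a sequence of
length `2` in `Z_p` with no nonempty subsequence that is a `U(p)³`-weighted zero-sum
sequence. -/
theorem D_cubes_ge_three (p : ℕ) (hp : p.Prime) (hmod : p % 3 = 1) :
    ∃ L : List (ZMod p), L.length = 2 ∧
      ¬ HasSubWZS {x : ZMod p | ∃ u : (ZMod p)ˣ, (u : ZMod p) ^ 3 = x} L := by
  have : Fact p.Prime := ⟨hp⟩
  have three_dvd : 3 ∣ Nat.card (ZMod p)ˣ := by
    rw [Nat.card_eq_fintype_card, ZMod.card_units]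
    omega
  obtain ⟨x, hx⟩ := exists_forall_pow_ne_of_prime_dvd_card three_dvd
  exact ⟨[-1, (x : ZMod p)], rfl, not_hasSubWZS_neg_one_of_forall_pow_ne hx⟩
end

section
/- Let n = m_1 m_2 with m_1, m_2 ≥ 1, let A ⊆ Z_n, A_1 ⊆ Z_{m_1}, A_2 ⊆ Z_{m_2}, and suppose f_{n,m_1}(A) ⊆ A_1 and f_{n,m_2}(A) ⊆ A_2. Let k, l ≥ 1 and suppose there exists a sequence of length k − 1 in Z_{m_1} having no nonempty subsequence of consecutive terms which is an A_1-weighted zero-sum sequence, and a sequence of length l − 1 in Z_{m_2} having no nonempty subsequence of consecutive terms which is an A_2-weighted zero-sum sequence. Then there exists a sequence of length kl − 1 in Z_n having no nonempty subsequence of consecutive terms which is an A-weighted zero-sum sequence. (In particular C_A(n) ≥ C_{A_1}(m_1) · C_{A_2}(m_2).) -/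
/-!
Take sequences `x₁, …, x_{k-1}` in `ℤ_{m₁}` and `y₁, …, y_{l-1}` in `ℤ_{m₂}`, neither with a
weighted zero-sum window. Let `X = m₂x₁, …, m₂x_{k-1}` in `ℤ_n` and interleave
`X, y₁, X, y₂, …, y_{l-1}, X` (each `yᵢ` lifted to `ℤ_n`), a sequence of length `kl - 1`.
A window lying in one copy of `X` cannot be a weighted zero-sum: multiplication by `m₂` embeds
`ℤ_{m₁}` in `ℤ_n` compatibly with the weights. A window meeting some `yᵢ` reduces mod `m₂` to a
window of the `yᵢ` padded with the zeros coming from the copies of `X`, and zeros contribute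
nothing to a weighted sum.
-/

open List

section WeightedSums

variable {R S : Type*} [Semiring R] [Semiring S]

def weightedSums (A : Set R) : List R → Set R
  | [] => {0}
  | x :: L => Set.image2 (fun a t => a * x + t) A (weightedSums A L)

@[simp] lemma weightedSums_nil (A : Set R) : weightedSums A [] = {0} := rfl

@[simp] lemma weightedSums_cons (A : Set R) (x : R) (L : List R) :
    weightedSums A (x :: L) = Set.image2 (fun a t => a * x + t) A (weightedSums A L) := rfl

lemma mem_weightedSums_iff {A : Set R} {L : List R} {t : R} :
    t ∈ weightedSums A L ↔
      ∃ a : List R, a.length = L.length ∧ (∀ w ∈ a, w ∈ A) ∧ (zipWith (· * ·) a L).sum = t := by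
  induction L generalizing t with
  | nil => simp [eq_comm]
  | cons x L ih =>
    constructor
    · rintro ⟨a, ha, s, hs, rfl⟩
      obtain ⟨as, hlen, hmem, rfl⟩ := ih.mp hs
      exact ⟨a :: as, by simp [hlen], forall_mem_cons.mpr ⟨ha, hmem⟩, by simp⟩
    · rintro ⟨_ | ⟨a, as⟩, hlen, hmem, rfl⟩
      · simp at hlen
      · simp only [length_cons, add_left_inj, mem_cons, forall_eq_or_imp] at hlen hmem
        exact ⟨a, hmem.1, _, ih.mpr ⟨as, hlen, hmem.2, rfl⟩, by simp⟩

lemma exists_map_eq_of_mem_weightedSums_append {A : Set R} (φ : R →+* S) {l r : List R}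
    (hl : ∀ x ∈ l, φ x = 0) {t : R} (ht : t ∈ weightedSums A (l ++ r)) :
    ∃ v ∈ weightedSums A r, φ t = φ v := by
  induction l generalizing t with
  | nil => exact ⟨t, ht, rfl⟩
  | cons x l ih =>
    obtain ⟨a, -, s, hs, rfl⟩ := ht
    obtain ⟨v, hv, hsv⟩ := ih (fun y hy => hl y (mem_cons_of_mem x hy)) hs
    exact ⟨v, hv, by simp [hl x mem_cons_self, hsv]⟩

lemma map_eq_zero_of_mem_weightedSums {A : Set R} (φ : R →+* S) {l : List R}
    (hl : ∀ x ∈ l, φ x = 0) {t : R} (ht : t ∈ weightedSums A l) : φ t = 0 := by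
  obtain ⟨v, rfl, hv⟩ :=
    exists_map_eq_of_mem_weightedSums_append φ hl (r := []) (by simpa using ht)
  simpa using hv

lemma exists_eq_of_mem_weightedSums_map {A : Set R} {B : Set S} (φ : R →+* S)
    (hAB : ∀ a ∈ A, φ a ∈ B) (ι : S →+ R) (hι : ∀ a v, a * ι v = ι (φ a * v))
    {L : List S} {t : R} (ht : t ∈ weightedSums A (L.map ι)) :
    ∃ u ∈ weightedSums B L, t = ι u := by
  induction L generalizing t with
  | nil => exact ⟨0, rfl, by simpa using ht⟩
  | cons x L ih =>
    obtain ⟨a, ha, s, hs, rfl⟩ := ht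
    obtain ⟨u, hu, rfl⟩ := ih hs
    exact ⟨φ a * x + u, ⟨φ a, hAB a ha, u, hu, rfl⟩, by rw [map_add, ← hι]⟩

end WeightedSums

section Windows

variable {n m : ℕ} {A : Set (ZMod n)} {B : Set (ZMod m)}

lemma hasConsecWZS_iff {L : List (ZMod n)} :
    HasConsecWZS A L ↔ ∃ W, W <:+: L ∧ W ≠ [] ∧ 0 ∈ weightedSums A W := by
  simp only [HasConsecWZS, IsWeightedZeroSum, ← mem_weightedSums_iff, IsInfix]
  constructor
  · rintro ⟨l₁, W, l₃, rfl, hW, h0⟩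
    exact ⟨W, ⟨l₁, l₃, rfl⟩, hW, h0⟩
  · rintro ⟨W, ⟨l₁, l₃, rfl⟩, hW, h0⟩
    exact ⟨l₁, W, l₃, rfl, hW, h0⟩

lemma HasConsecWZS.mono {L L' : List (ZMod n)} (h : HasConsecWZS A L) (hL : L <:+: L') :
    HasConsecWZS A L' := by
  obtain ⟨W, hW, hne, h0⟩ := hasConsecWZS_iff.mp h
  exact hasConsecWZS_iff.mpr ⟨W, hW.trans hL, hne, h0⟩

lemma HasConsecWZS.of_map_injective (φ : ZMod n →+* ZMod m) (hAB : ∀ a ∈ A, φ a ∈ B)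
    (ι : ZMod m →+ ZMod n) (hι : ∀ a v, a * ι v = ι (φ a * v)) (hinj : Function.Injective ι)
    {L : List (ZMod m)} (h : HasConsecWZS A (L.map ι)) : HasConsecWZS B L := by
  obtain ⟨_, hWL, hne, h0⟩ := hasConsecWZS_iff.mp h
  obtain ⟨W, hW, rfl⟩ := infix_map_iff.mp hWL
  obtain ⟨u, hu, hu0⟩ := exists_eq_of_mem_weightedSums_map φ hAB ι hι h0
  rw [eq_comm, map_eq_zero_iff ι hinj] at hu0
  exact hasConsecWZS_iff.mpr ⟨W, hW, by simpa using hne, hu0 ▸ hu⟩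

end Windows

section BlockInterleave

variable {α : Type*}

def blockInterleave (X : List α) : List α → List α
  | [] => X
  | y :: M => X ++ y :: blockInterleave X M

lemma length_blockInterleave_add_one (X M : List α) :
    (blockInterleave X M).length + 1 = (X.length + 1) * (M.length + 1) := by
  induction M with
  | nil => simp [blockInterleave]
  | cons y M ih => simp only [blockInterleave, length_append, length_cons]; grind

variable {n m : ℕ} {A : Set (ZMod n)} {B : Set (ZMod m)}

lemma exists_prefix_of_mem_weightedSums_prefix_blockInterleave (φ : ZMod n →+* ZMod m)
    (hAB : ∀ a ∈ A, φ a ∈ B) {X : List (ZMod n)} (hX : ∀ x ∈ X, φ x = 0) {M p : List (ZMod n)}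
    (hp : p <+: blockInterleave X M) {t : ZMod n} (ht : t ∈ weightedSums A p) :
    ∃ q, q <+: M ∧ φ t ∈ weightedSums B (q.map φ) := by
  have of_prefix_X {M p} (hp : p <+: X) {t} (ht : t ∈ weightedSums A p) :
      ∃ q : List (ZMod n), q <+: M ∧ φ t ∈ weightedSums B (q.map φ) :=
    ⟨[], nil_prefix,
      by simpa using map_eq_zero_of_mem_weightedSums φ (fun x hx => hX x (hp.subset hx)) ht⟩
  induction M generalizing p t with
  | nil => exact of_prefix_X hp ht
  | cons y M ih =>
    rcases prefix_or_prefix_of_prefix hp (prefix_append X _) with hpX | ⟨r, rfl⟩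
    · exact of_prefix_X hpX ht
    rcases prefix_cons_iff.mp ((prefix_append_right_inj X).mp hp) with rfl | ⟨p', rfl, hp'⟩
    · exact of_prefix_X (by simp) ht
    obtain ⟨v, ⟨a, ha, s, hs, rfl⟩, hv⟩ := exists_map_eq_of_mem_weightedSums_append φ hX ht
    obtain ⟨q, hq, hsq⟩ := ih hp' hs
    exact ⟨y :: q, (prefix_cons_inj y).mpr hq, hv ▸ ⟨φ a, hAB a ha, φ s, hsq, by simp⟩⟩

lemma HasConsecWZS.of_blockInterleave (φ : ZMod n →+* ZMod m) (hAB : ∀ a ∈ A, φ a ∈ B)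
    {X : List (ZMod n)} (hX : ∀ x ∈ X, φ x = 0) {M : List (ZMod n)}
    (h : HasConsecWZS A (blockInterleave X M)) : HasConsecWZS A X ∨ HasConsecWZS B (M.map φ) := by
  induction M with
  | nil => exact Or.inl h
  | cons y M ih =>
    have crossing {l p} (hl : l <:+ X) (hp : p <+: blockInterleave X M)
        (h0 : 0 ∈ weightedSums A (l ++ y :: p)) : HasConsecWZS B ((y :: M).map φ) := by
      obtain ⟨v, ⟨a, ha, s, hs, rfl⟩, hv⟩ :=
        exists_map_eq_of_mem_weightedSums_append φ (fun x hx => hX x (hl.subset hx)) h0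
      obtain ⟨q, hq, hsq⟩ :=
        exists_prefix_of_mem_weightedSums_prefix_blockInterleave φ hAB hX hp hs
      refine hasConsecWZS_iff.mpr
        ⟨(y :: q).map φ, (((prefix_cons_inj y).mpr hq).map φ).isInfix, by simp, ?_⟩
      rw [map_zero] at hv
      exact hv ▸ ⟨φ a, hAB a ha, φ s, hsq, by simp⟩
    obtain ⟨W, hW, hne, h0⟩ := hasConsecWZS_iff.mp h
    rcases infix_append_iff.mp hW with hWX | hWr | ⟨l, r, rfl, hl, hr⟩
    · exact Or.inl (hasConsecWZS_iff.mpr ⟨W, hWX, hne, h0⟩)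
    · rcases infix_cons_iff.mp hWr with hWp | hWr
      · rcases prefix_cons_iff.mp hWp with rfl | ⟨p, rfl, hp⟩
        · exact absurd rfl hne
        · exact Or.inr (crossing nil_suffix hp h0)
      · exact (ih (hasConsecWZS_iff.mpr ⟨W, hWr, hne, h0⟩)).imp id
          fun h => h.mono (suffix_cons _ _).isInfix
    · rcases prefix_cons_iff.mp hr with rfl | ⟨p, rfl, hp⟩
      · exact Or.inl (hasConsecWZS_iff.mpr ⟨l ++ [], by simpa using hl.isInfix, hne, h0⟩)
      · exact Or.inr (crossing hl hp h0)

end BlockInterleave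

namespace ZMod

variable {m₁ m₂ : ℕ}

-- `v ↦ m₂ v`, well defined because `m₂ m₁ = 0` in `ZMod (m₁ * m₂)`.
def mulCofactorHom (m₁ m₂ : ℕ) : ZMod m₁ →+ ZMod (m₁ * m₂) :=
  lift m₁ ⟨(AddMonoidHom.mulLeft (m₂ : ZMod (m₁ * m₂))).comp (Int.castAddHom _), by
    simp [← Nat.cast_mul, mul_comm m₂ m₁]⟩

lemma mulCofactorHom_intCast (j : ℤ) : mulCofactorHom m₁ m₂ j = m₂ * j :=
  lift_coe _ _ j

lemma mul_mulCofactorHom (h : m₁ ∣ m₁ * m₂) (a : ZMod (m₁ * m₂)) (v : ZMod m₁) :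
    a * mulCofactorHom m₁ m₂ v = mulCofactorHom m₁ m₂ (castHom h (ZMod m₁) a * v) := by
  obtain ⟨i, rfl⟩ := intCast_surjective a
  obtain ⟨j, rfl⟩ := intCast_surjective v
  rw [map_intCast (castHom h (ZMod m₁)), mulCofactorHom_intCast, ← Int.cast_mul,
    mulCofactorHom_intCast]
  push_cast
  ring

lemma mulCofactorHom_injective (hm₂ : m₂ ≠ 0) : Function.Injective (mulCofactorHom m₁ m₂) := by
  refine (injective_iff_map_eq_zero _).mpr fun v hv => ?_
  obtain ⟨j, rfl⟩ := intCast_surjective v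
  rw [mulCofactorHom_intCast, ← Int.cast_natCast, ← Int.cast_mul,
    intCast_zmod_eq_zero_iff_dvd, Nat.cast_mul, mul_comm (m₂ : ℤ)] at hv
  exact (intCast_zmod_eq_zero_iff_dvd j m₁).mpr
    (Int.dvd_of_mul_dvd_mul_right (by exact_mod_cast hm₂) hv)

lemma castHom_mulCofactorHom (h : m₂ ∣ m₁ * m₂) (v : ZMod m₁) :
    castHom h (ZMod m₂) (mulCofactorHom m₁ m₂ v) = 0 := by
  obtain ⟨j, rfl⟩ := intCast_surjective v
  simp [mulCofactorHom_intCast]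

end ZMod

theorem C_lower_bound_multiplicative_general (m₁ m₂ : ℕ) (hm₂ : 1 ≤ m₂)
    (A : Set (ZMod (m₁ * m₂))) (A₁ : Set (ZMod m₁)) (A₂ : Set (ZMod m₂))
    (hA₁ : ∀ a ∈ A, ZMod.castHom (⟨m₂, rfl⟩ : m₁ ∣ m₁ * m₂) (ZMod m₁) a ∈ A₁)
    (hA₂ : ∀ a ∈ A, ZMod.castHom (⟨m₁, mul_comm m₁ m₂⟩ : m₂ ∣ m₁ * m₂) (ZMod m₂) a ∈ A₂)
    (k l : ℕ) (hk : 1 ≤ k) (hl : 1 ≤ l)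
    (hS₁ : ∃ L : List (ZMod m₁), L.length = k - 1 ∧ ¬ HasConsecWZS A₁ L)
    (hS₂ : ∃ L : List (ZMod m₂), L.length = l - 1 ∧ ¬ HasConsecWZS A₂ L) :
    ∃ L : List (ZMod (m₁ * m₂)), L.length = k * l - 1 ∧ ¬ HasConsecWZS A L := by
  obtain ⟨L₁, hL₁len, hL₁⟩ := hS₁
  obtain ⟨L₂, hL₂len, hL₂⟩ := hS₂
  set f₂ := ZMod.castHom (⟨m₁, mul_comm m₁ m₂⟩ : m₂ ∣ m₁ * m₂) (ZMod m₂)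
  set X := L₁.map (ZMod.mulCofactorHom m₁ m₂)
  set M := L₂.map (ZMod.cast : ZMod m₂ → ZMod (m₁ * m₂))
  refine ⟨blockInterleave X M, ?_, fun h => ?_⟩
  · have hlen := length_blockInterleave_add_one X M
    rw [length_map, length_map, hL₁len, hL₂len, Nat.sub_add_cancel hk,
      Nat.sub_add_cancel hl] at hlen
    omega
  have hX : ∀ x ∈ X, f₂ x = 0 :=
    forall_mem_map.mpr fun v _ => ZMod.castHom_mulCofactorHom _ v
  rcases h.of_blockInterleave f₂ hA₂ hX with h | h
  · exact hL₁ (h.of_map_injective _ hA₁ _ (ZMod.mul_mulCofactorHom _)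
      (ZMod.mulCofactorHom_injective (by omega)))
  · rw [map_map, (ZMod.ringHom_rightInverse f₂).comp_eq_id, map_id] at h
    exact hL₂ h

/-- the multiplicative lower-bound lemma for `C_A(n)` with `n = m₁m₂`. -/
theorem C_lower_bound_multiplicative (m₁ m₂ : ℕ) (hm₁ : 1 ≤ m₁) (hm₂ : 1 ≤ m₂)
    (A : Set (ZMod (m₁ * m₂))) (A₁ : Set (ZMod m₁)) (A₂ : Set (ZMod m₂))
    (hA₁ : ∀ a ∈ A, ZMod.castHom (⟨m₂, rfl⟩ : m₁ ∣ m₁ * m₂) (ZMod m₁) a ∈ A₁)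
    (hA₂ : ∀ a ∈ A, ZMod.castHom (⟨m₁, mul_comm m₁ m₂⟩ : m₂ ∣ m₁ * m₂) (ZMod m₂) a ∈ A₂)
    (k l : ℕ) (hk : 1 ≤ k) (hl : 1 ≤ l)
    (hS₁ : ∃ L : List (ZMod m₁), L.length = k - 1 ∧ ¬ HasConsecWZS A₁ L)
    (hS₂ : ∃ L : List (ZMod m₂), L.length = l - 1 ∧ ¬ HasConsecWZS A₂ L) :
    ∃ L : List (ZMod (m₁ * m₂)), L.length = k * l - 1 ∧ ¬ HasConsecWZS A L :=
  C_lower_bound_multiplicative_general m₁ m₂ hm₂ A A₁ A₂ hA₁ hA₂ k l hk hl hS₁ hS₂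
end
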